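/- arXiv:2503.14142 — 7 statements merged into one kernel-verified Lean document; each statement's English description precedes it below -/
import Mathlib

section
/- Let K be a nonnegative integer and let a_0, …, a_K be nonnegative integers. Set S_k := a_0 + ⋯ + a_k for k ∈ {0,…,K} and set a_{K+1} := 0. Then for every real β ∈ (1,2) and every real λ ∈ (3/4, 1) it holds that Σ_{k=0}^{K} (max{S_k − a_{k+1}, 0})^β / S_k^{β−1} · λ^k ≥ ((2λ−1)/(2λ)) · Σ_{k=0}^{K} a_k λ^k, where any summand on the left-hand side with S_k = 0 is interpreted as 0. -/
/-!
Lowering the exponent β to 2 only decreases each summand, because `(M / S) ^ β ≥ (M / S) ^ 2`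
when `M ≤ S`. The quadratic inequality is proved by induction along the sequence, carrying the
potential `min (a (k+1)) ((λ - 1/4) S_k + (1 - λ) a (k+1))` weighted by `λ ^ k`. One step of the
induction reduces to the bound `μ (1 - μ/4) T ≤ (T - B)₊² / T + μ B`, used with `μ = 1` and
`μ = 1 - λ`; at the end `a (K+1) = 0` makes the potential vanish.
-/

open Finset

namespace WeightedPartialSums

theorem sq_div_le_rpow_div_rpow {β M S : ℝ} (hβ : β ≤ 2) (hM : 0 ≤ M) (hMS : M ≤ S) :
    M ^ 2 / S ≤ M ^ β / S ^ (β - 1) := by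
  rcases hM.eq_or_lt with rfl | hM
  · simp only [ne_eq, OfNat.ofNat_ne_zero, not_false_eq_true, zero_pow, zero_div]
    positivity
  have hS : 0 < S := hM.trans_le hMS
  have hratio : (M / S) ^ (2 : ℝ) ≤ (M / S) ^ β :=
    Real.rpow_le_rpow_of_exponent_ge (div_pos hM hS) ((div_le_one hS).2 hMS) hβ
  calc M ^ 2 / S = S * (M / S) ^ (2 : ℝ) := by
        rw [Real.rpow_two]; field_simp
    _ ≤ S * (M / S) ^ β := by gcongr
    _ = M ^ β / S ^ (β - 1) := by
        rw [Real.div_rpow hM.le hS.le, Real.rpow_sub_one hS.ne']; field_simp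

theorem mul_le_sq_div_add {μ T B : ℝ} (hμ : 0 ≤ μ) (hT : 0 ≤ T) (hB : 0 ≤ B) :
    μ * (1 - μ / 4) * T ≤ max (T - B) 0 ^ 2 / T + μ * B := by
  rcases le_total B T with hBT | hTB
  · rcases hT.eq_or_lt with rfl | hT
    · simp only [mul_zero, zero_sub, div_zero, zero_add]; positivity
    rw [max_eq_left (sub_nonneg.2 hBT)]
    have hsq : 0 ≤ (T - B - μ * T / 2) ^ 2 / T := by positivity
    have : (T - B - μ * T / 2) ^ 2 / T = (T - B) ^ 2 / T + μ * B - μ * (1 - μ / 4) * T := by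
      field_simp; ring
    linarith
  · rw [max_eq_right (sub_nonpos.2 hTB)]
    simp only [ne_eq, OfNat.ofNat_ne_zero, not_false_eq_true, zero_pow, zero_div, zero_add]
    nlinarith [mul_le_mul_of_nonneg_left hTB hμ, mul_nonneg (mul_nonneg hμ hμ) hT]

noncomputable def potential (lam S B : ℝ) : ℝ := min B ((lam - 1 / 4) * S + (1 - lam) * B)

theorem potential_nonneg {lam S B : ℝ} (hl1 : 1 / 4 ≤ lam) (hl2 : lam ≤ 1) (hS : 0 ≤ S)
    (hB : 0 ≤ B) : 0 ≤ potential lam S B :=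
  le_min hB (by nlinarith)

theorem potential_zero_right {lam S : ℝ} (hl : 1 / 4 ≤ lam) (hS : 0 ≤ S) :
    potential lam S 0 = 0 :=
  min_eq_left (by nlinarith)

theorem potential_step {lam S A B : ℝ} (hl1 : 3 / 4 ≤ lam) (hl2 : lam ≤ 1) (hS : 0 ≤ S)
    (hA : 0 ≤ A) (hB : 0 ≤ B) :
    (lam - 1 / 2) * A + potential lam S A ≤
      lam * (max (S + A - B) 0 ^ 2 / (S + A) + potential lam (S + A) B) := by
  have hl0 : 0 ≤ lam := by linarith
  have hΦ : potential lam S A ≤ (lam - 1 / 4) * S + (1 - lam) * A := min_le_right _ _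
  have h1 := mul_le_sq_div_add zero_le_one (add_nonneg hS hA) hB
  have h2 := mul_le_sq_div_add (sub_nonneg.2 hl2) (add_nonneg hS hA) hB
  calc (lam - 1 / 2) * A + potential lam S A ≤ A / 2 + (lam - 1 / 4) * S := by linarith
    _ ≤ lam * (max (S + A - B) 0 ^ 2 / (S + A) + potential lam (S + A) B) := by
      simp only [potential, ← min_add_add_left, mul_min_of_nonneg _ _ hl0]
      refine le_min ?_ ?_
      · nlinarith
      · have hcS : 0 ≤ (1 - lam) * (1 - lam * (1 - lam)) :=
          mul_nonneg (by linarith) (by nlinarith)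
        have hcA : 0 ≤ lam * (3 - (1 - lam) ^ 2) - 2 := by nlinarith
        nlinarith [mul_le_mul_of_nonneg_left h2 hl0, mul_nonneg hcS hS, mul_nonneg hcA hA]

/-- At `T = 0` the left side is the junk value `x / 0 = 0`, matching the convention of the
theorem's summands. -/
theorem sq_div_mul_le_ite_rpow {β T B w : ℝ} (hβ : β ≤ 2) (hT : 0 ≤ T) (hB : 0 ≤ B)
    (hw : 0 ≤ w) :
    max (T - B) 0 ^ 2 / T * w ≤ if T = 0 then 0 else max (T - B) 0 ^ β / T ^ (β - 1) * w := by
  split_ifs with hT0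
  · simp [hT0]
  · exact mul_le_mul_of_nonneg_right
      (sq_div_le_rpow_div_rpow hβ (le_max_right _ _) (max_le (sub_le_self _ hB) hT)) hw

theorem sum_le_sum_sq_div_add_potential {lam : ℝ} (hl1 : 3 / 4 ≤ lam) (hl2 : lam ≤ 1)
    {a : ℕ → ℝ} (ha : ∀ k, 0 ≤ a k) (n : ℕ) :
    (lam - 1 / 2) * ∑ k ∈ range n, a k * lam ^ k ≤
      lam * ∑ k ∈ range n,
          max ((∑ j ∈ range (k + 1), a j) - a (k + 1)) 0 ^ 2 / (∑ j ∈ range (k + 1), a j) *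
            lam ^ k +
        lam ^ n * potential lam (∑ j ∈ range n, a j) (a n) := by
  induction n with
  | zero =>
    simpa using potential_nonneg (by linarith) hl2 le_rfl (ha 0)
  | succ n ih =>
    have hstep := mul_le_mul_of_nonneg_left
      (potential_step (S := ∑ j ∈ range n, a j) hl1 hl2 (sum_nonneg fun j _ => ha j) (ha n)
        (ha (n + 1)))
      (pow_nonneg (by linarith : (0 : ℝ) ≤ lam) n)
    rw [sum_range_succ, sum_range_succ, sum_range_succ a n, pow_succ]
    linear_combination ih + hstep

end WeightedPartialSums

open WeightedPartialSums

theorem stmt_0_general (K : ℕ) (a : ℕ → ℕ) (ha : a (K + 1) = 0)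
    (β lam : ℝ) (hβ2 : β < 2) (hl1 : 3 / 4 < lam) (hl2 : lam < 1) :
    (2 * lam - 1) / (2 * lam) * ∑ k ∈ Finset.range (K + 1), (a k : ℝ) * lam ^ k ≤
      ∑ k ∈ Finset.range (K + 1),
        (if (∑ j ∈ Finset.range (k + 1), (a j : ℝ)) = 0 then 0
          else (max ((∑ j ∈ Finset.range (k + 1), (a j : ℝ)) - (a (k + 1) : ℝ)) 0) ^ β /
            (∑ j ∈ Finset.range (k + 1), (a j : ℝ)) ^ (β - 1) * lam ^ k) := by
  have hlam : 0 < lam := by linarith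
  have hsum_nonneg (n : ℕ) : 0 ≤ ∑ j ∈ range n, (a j : ℝ) :=
    sum_nonneg fun j _ => (a j).cast_nonneg
  have hquad := sum_le_sum_sq_div_add_potential hl1.le hl2.le (fun k => (a k).cast_nonneg) (K + 1)
  rw [ha, Nat.cast_zero, potential_zero_right (by linarith) (hsum_nonneg _), mul_zero,
    add_zero] at hquad
  have hcompare := sum_le_sum fun k (_ : k ∈ range (K + 1)) =>
    sq_div_mul_le_ite_rpow hβ2.le (hsum_nonneg (k + 1)) (a (k + 1)).cast_nonneg
      (pow_nonneg hlam.le k)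
  calc (2 * lam - 1) / (2 * lam) * ∑ k ∈ range (K + 1), (a k : ℝ) * lam ^ k
      = (lam - 1 / 2) * (∑ k ∈ range (K + 1), (a k : ℝ) * lam ^ k) / lam := by
        field_simp
    _ ≤ _ := by
      rw [div_le_iff₀ hlam]
      linarith [mul_le_mul_of_nonneg_left hcompare hlam.le]

/-- **Lemma 6.2 (lemma:a_i).** For nonnegative integers `a 0, …, a K` with the convention
`a (K+1) = 0`, partial sums `S k = a 0 + ⋯ + a k`, every `β ∈ (1,2)` and `λ ∈ (3/4,1)`:
`∑_{k=0}^{K} max{S k − a (k+1), 0}^β / (S k)^(β−1) · λ^k ≥ (2λ−1)/(2λ) · ∑_{k=0}^{K} a k · λ^k`,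
where a summand on the left-hand side with `S k = 0` is interpreted as `0`. -/
theorem stmt_0 (K : ℕ) (a : ℕ → ℕ) (ha : a (K + 1) = 0)
    (β lam : ℝ) (hβ1 : 1 < β) (hβ2 : β < 2) (hl1 : 3 / 4 < lam) (hl2 : lam < 1) :
    (2 * lam - 1) / (2 * lam) * ∑ k ∈ Finset.range (K + 1), (a k : ℝ) * lam ^ k ≤
      ∑ k ∈ Finset.range (K + 1),
        (if (∑ j ∈ Finset.range (k + 1), (a j : ℝ)) = 0 then 0
          else (max ((∑ j ∈ Finset.range (k + 1), (a j : ℝ)) - (a (k + 1) : ℝ)) 0) ^ β /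
            (∑ j ∈ Finset.range (k + 1), (a j : ℝ)) ^ (β - 1) * lam ^ k) :=
  stmt_0_general K a ha β lam hβ2 hl1 hl2
end

section
/- For every real β ∈ (1,2), every real λ ∈ (3/4, 1), and every real t ≥ 0 it holds that (max{1−t, 0})^β + (1+t)λ − 1 ≥ ((2λ−1)/2) · t. -/
/-- The key scalar inequality in the inductive step of Lemma 6.2 (lemma:a_i):
for every `β ∈ (1,2)`, `λ ∈ (3/4,1)` and `t ≥ 0`,
`max{1−t, 0}^β + (1+t)λ − 1 ≥ ((2λ−1)/2)·t`. -/
theorem stmt_1 (β lam t : ℝ) (hβ1 : 1 < β) (hβ2 : β < 2)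
    (hl1 : 3 / 4 < lam) (hl2 : lam < 1) (ht : 0 ≤ t) :
    (2 * lam - 1) / 2 * t ≤ (max (1 - t) 0) ^ β + (1 + t) * lam - 1 := by
  rcases le_or_gt 1 t with h1 | h1
  · have hm : max (1 - t) 0 = 0 := max_eq_right (by linarith)
    rw [hm, Real.zero_rpow (by linarith : β ≠ 0)]
    nlinarith
  · have hx : (0:ℝ) < 1 - t := by linarith
    have hm : max (1 - t) 0 = 1 - t := max_eq_left (by linarith)
    rw [hm]
    have key : (1 - t) ^ (2:ℝ) ≤ (1 - t) ^ β :=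
      Real.rpow_le_rpow_of_exponent_ge hx (by linarith) (le_of_lt hβ2)
    have h2 : (1 - t) ^ (2:ℝ) = (1 - t) ^ (2:ℕ) := by
      rw [show (2:ℝ) = ((2:ℕ):ℝ) by norm_num, Real.rpow_natCast]
    rw [h2] at key
    nlinarith [sq_nonneg (t - 3/4)]
end

section
/- Let n ≥ 2 and m ≥ 0 be integers, let A ⊆ ℝᵐ be a bounded measurable set, let δ > 0, and let p be a real number with 0 ≤ p < n. Then ∫_{B_δⁿ × A} |∇u⋆(x′, x″)|^p d(x′, x″) = (n−1)^{p/2} · ω_{n−1} · λ_m(A) · δ^{n−p}/(n−p), where B_δⁿ is the open ball of radius δ centered at the origin in ℝⁿ and λ_m denotes Lebesgue measure on ℝᵐ. -/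
/-! Off the null set `{x′ = 0}`, the derivative of `u⋆` is `‖x′‖⁻¹` times the orthogonal projection
onto `x′ᗮ`, composed with the projection to the first factor, so `|∇u⋆| = √(n-1) / ‖x′‖`.
Fubini splits off the factor `λ_m(A)`, and polar coordinates reduce the integral of `‖x′‖^(-p)`
over `B_δⁿ` to `ω_{n-1} ∫₀^δ t^(n-1-p) dt`. -/

open MeasureTheory

/-- The Frobenius (Hilbert–Schmidt) norm of a continuous linear map from
`ℝⁿ × ℝᵐ` to `ℝⁿ`, computed via the standard orthonormal basis of the product. -/
noncomputable def frobProd {n m : ℕ}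
    (f : (EuclideanSpace ℝ (Fin n) × EuclideanSpace ℝ (Fin m)) →L[ℝ] EuclideanSpace ℝ (Fin n)) :
    ℝ :=
  Real.sqrt ((∑ i : Fin n, ‖f (EuclideanSpace.single i 1, 0)‖ ^ 2) +
    ∑ j : Fin m, ‖f (0, EuclideanSpace.single j 1)‖ ^ 2)

open Set Metric

section VortexDerivative

variable {F : Type*} [NormedAddCommGroup F] [InnerProductSpace ℝ F] {y : F}

theorem hasFDerivAt_norm_of_ne_zero (hy : y ≠ 0) :
    HasFDerivAt (‖·‖) (‖y‖⁻¹ • innerSL ℝ y) y := by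
  have hsqrt := (hasStrictFDerivAt_norm_sq y).hasFDerivAt.sqrt (by positivity)
  simp only [Real.sqrt_sq (norm_nonneg _)] at hsqrt
  convert hsqrt using 1
  rw [← ofNat_smul_eq_nsmul ℝ, smul_smul]
  congr 1
  field_simp

/-- `‖y‖⁻¹` times the orthogonal projection onto `yᗮ`. -/
noncomputable def vortexDeriv (y : F) : F →L[ℝ] F :=
  ‖y‖⁻¹ • (ContinuousLinearMap.id ℝ F - (‖y‖ ^ 2)⁻¹ • (innerSL ℝ y).smulRight y)

theorem vortexDeriv_apply (y v : F) :
    vortexDeriv y v = ‖y‖⁻¹ • (v - (inner ℝ y v / ‖y‖ ^ 2) • y) := by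
  simp [vortexDeriv, smul_smul, div_eq_inv_mul]

theorem hasFDerivAt_norm_inv_smul (hy : y ≠ 0) :
    HasFDerivAt (fun z : F => ‖z‖⁻¹ • z) (vortexDeriv y) y := by
  have hinv := (hasDerivAt_inv (norm_ne_zero_iff.2 hy)).comp_hasFDerivAt y
    (hasFDerivAt_norm_of_ne_zero hy)
  refine (hinv.smul (hasFDerivAt_id y)).congr_fderiv ?_
  ext v
  simp only [vortexDeriv_apply, add_apply, smul_apply,
    ContinuousLinearMap.smulRight_apply, innerSL_apply_apply, ContinuousLinearMap.id_apply,
    Function.comp_apply, id, smul_sub, smul_smul]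
  rw [sub_eq_add_neg, ← neg_smul]
  congr 2
  ring

theorem norm_vortexDeriv_apply_sq (hy : y ≠ 0) (v : F) :
    ‖vortexDeriv y v‖ ^ 2 = (‖v‖ ^ 2 - inner ℝ y v ^ 2 / ‖y‖ ^ 2) / ‖y‖ ^ 2 := by
  have hy' : ‖y‖ ≠ 0 := norm_ne_zero_iff.2 hy
  rw [vortexDeriv_apply, norm_smul, mul_pow, norm_sub_sq_real, real_inner_smul_right,
    norm_smul, mul_pow, real_inner_comm v y, Real.norm_eq_abs, sq_abs, Real.norm_eq_abs, sq_abs]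
  field_simp
  ring

end VortexDerivative

section EuclideanVortex

variable {n m : ℕ}

theorem frobProd_comp_fst (L : EuclideanSpace ℝ (Fin n) →L[ℝ] EuclideanSpace ℝ (Fin n)) :
    frobProd (L.comp (ContinuousLinearMap.fst ℝ _ (EuclideanSpace ℝ (Fin m))))
      = √(∑ i, ‖L (EuclideanSpace.single i 1)‖ ^ 2) := by
  simp [frobProd]

theorem sum_norm_vortexDeriv_single_sq {y : EuclideanSpace ℝ (Fin n)} (hy : y ≠ 0) :
    ∑ i, ‖vortexDeriv y (EuclideanSpace.single i 1)‖ ^ 2 = (n - 1) / ‖y‖ ^ 2 := by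
  have hy' : ‖y‖ ≠ 0 := norm_ne_zero_iff.2 hy
  simp only [norm_vortexDeriv_apply_sq hy, PiLp.norm_single, norm_one, one_pow,
    EuclideanSpace.inner_single_right, one_mul, ← Finset.sum_div, Finset.sum_sub_distrib]
  simp [← EuclideanSpace.real_norm_sq_eq, hy']

theorem frobProd_fderiv_vortex {x : EuclideanSpace ℝ (Fin n) × EuclideanSpace ℝ (Fin m)}
    (hx : x.1 ≠ 0) :
    frobProd (fderiv ℝ (fun q : EuclideanSpace ℝ (Fin n) × EuclideanSpace ℝ (Fin m) =>
        ‖q.1‖⁻¹ • q.1) x) = √(n - 1) / ‖x.1‖ := by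
  have hD := (hasFDerivAt_norm_inv_smul hx).comp x (hasFDerivAt_fst (p := x))
  rw [show (fun q : EuclideanSpace ℝ (Fin n) × EuclideanSpace ℝ (Fin m) => ‖q.1‖⁻¹ • q.1)
    = (fun z => ‖z‖⁻¹ • z) ∘ Prod.fst from rfl, hD.fderiv, frobProd_comp_fst,
    sum_norm_vortexDeriv_single_sq hx, Real.sqrt_div' _ (by positivity),
    Real.sqrt_sq (norm_nonneg _)]

end EuclideanVortex

section RadialIntegral

theorem integral_Ioo_pow_mul_inv_rpow {k : ℕ} (hk : 1 ≤ k) {δ p : ℝ} (hδ : 0 ≤ δ) (hp : p < k) :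
    ∫ t in Ioo 0 δ, t ^ (k - 1) * (t ^ p)⁻¹ = δ ^ ((k : ℝ) - p) / ((k : ℝ) - p) := by
  have hpow : EqOn (fun t : ℝ => t ^ (k - 1) * (t ^ p)⁻¹) (fun t => t ^ ((k : ℝ) - 1 - p))
      (Ioo 0 δ) := by
    intro t ht
    dsimp only
    rw [← Real.rpow_natCast, ← Real.rpow_neg ht.1.le, ← Real.rpow_add ht.1, Nat.cast_sub hk]
    norm_num
    ring_nf
  rw [setIntegral_congr_fun measurableSet_Ioo hpow, ← integral_Ioc_eq_integral_Ioo,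
    ← intervalIntegral.integral_of_le hδ, integral_rpow (Or.inl (by linarith)),
    Real.zero_rpow (by linarith)]
  ring_nf

variable {E : Type*} [NormedAddCommGroup E] [NormedSpace ℝ E] [MeasurableSpace E] [BorelSpace E]
  [FiniteDimensional ℝ E] [Nontrivial E] (μ : Measure E) [μ.IsAddHaarMeasure]

theorem integral_ball_inv_norm_rpow {δ p : ℝ} (hδ : 0 ≤ δ) (hp : p < Module.finrank ℝ E) :
    ∫ y in ball (0 : E) δ, (‖y‖ ^ p)⁻¹ ∂μ
      = Module.finrank ℝ E * μ.real (ball 0 1) *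
          (δ ^ ((Module.finrank ℝ E : ℝ) - p) / ((Module.finrank ℝ E : ℝ) - p)) := by
  have hball : (ball (0 : E) δ).indicator (fun y => (‖y‖ ^ p)⁻¹)
      = fun y => (Iio δ).indicator (fun t => (t ^ p)⁻¹) ‖y‖ := by
    ext y
    simp [indicator]
  rw [← integral_indicator measurableSet_ball, hball, integral_fun_norm_addHaar μ,
    nsmul_eq_mul, smul_eq_mul]
  simp_rw [smul_eq_mul, ← indicator_mul_right (Iio δ) (fun t : ℝ => t ^ (Module.finrank ℝ E - 1))]
  rw [setIntegral_indicator measurableSet_Iio, Ioi_inter_Iio,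
    integral_Ioo_pow_mul_inv_rpow Module.finrank_pos hδ hp]
  ring

end RadialIntegral

theorem stmt_4_general (n m : ℕ) (hn : 2 ≤ n) (A : Set (EuclideanSpace ℝ (Fin m)))
    (δ : ℝ) (hδ : 0 < δ) (p : ℝ) (hpn : p < n) :
    ∫ x in (Metric.ball (0 : EuclideanSpace ℝ (Fin n)) δ) ×ˢ A,
        (frobProd (fderiv ℝ
          (fun q : EuclideanSpace ℝ (Fin n) × EuclideanSpace ℝ (Fin m) => ‖q.1‖⁻¹ • q.1) x)) ^ p
      = ((n : ℝ) - 1) ^ (p / 2) *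
          ((n : ℝ) * (volume (Metric.ball (0 : EuclideanSpace ℝ (Fin n)) 1)).toReal) *
          (volume A).toReal * δ ^ ((n : ℝ) - p) / ((n : ℝ) - p) := by
  have : NeZero n := ⟨by omega⟩
  have hn1 : (0 : ℝ) ≤ n - 1 := sub_nonneg.2 (Nat.one_le_cast.2 (by omega))
  have hae : ∀ᵐ x : EuclideanSpace ℝ (Fin n) × EuclideanSpace ℝ (Fin m), x.1 ≠ 0 := by
    rw [Measure.volume_eq_prod]
    exact Measure.quasiMeasurePreserving_fst.ae (Measure.ae_ne volume 0)
  -- the factor `1` is the `x″`-part of the product integrand, as `setIntegral_prod_mul` expects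
  have hpointwise : ∀ᵐ x : EuclideanSpace ℝ (Fin n) × EuclideanSpace ℝ (Fin m),
      (frobProd (fderiv ℝ (fun q : EuclideanSpace ℝ (Fin n) × EuclideanSpace ℝ (Fin m) =>
        ‖q.1‖⁻¹ • q.1) x)) ^ p = ((n : ℝ) - 1) ^ (p / 2) * ((‖x.1‖ ^ p)⁻¹ * 1) := by
    filter_upwards [hae] with x hx
    rw [frobProd_fderiv_vortex hx, Real.div_rpow (Real.sqrt_nonneg _) (norm_nonneg _),
      Real.sqrt_eq_rpow, ← Real.rpow_mul hn1, mul_one, div_eq_mul_inv]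
    ring_nf
  rw [integral_congr_ae (ae_restrict_of_ae hpointwise), integral_const_mul,
    Measure.volume_eq_prod, setIntegral_prod_mul (fun y => (‖y‖ ^ p)⁻¹) (fun _ => 1),
    setIntegral_const,
    integral_ball_inv_norm_rpow volume hδ.le (by rwa [finrank_euclideanSpace_fin]),
    finrank_euclideanSpace_fin]
  simp only [Measure.real, smul_eq_mul]
  ring

/-- **Lemma 5.1 (lem: flat vortex computation).** For the vortex map
`u⋆(x′,x″) = x′/‖x′‖`, a bounded measurable `A ⊆ ℝᵐ`, `δ > 0` and `0 ≤ p < n`: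
`∫_{B_δⁿ × A} |∇u⋆|^p = (n−1)^(p/2) · ω_{n−1} · λ_m(A) · δ^(n−p)/(n−p)`,
where `ω_{n−1} = n · λ_n(B₁ⁿ)` and `|∇u⋆|` is the Frobenius norm of the derivative. -/
theorem stmt_4 (n m : ℕ) (hn : 2 ≤ n) (A : Set (EuclideanSpace ℝ (Fin m)))
    (hAmeas : MeasurableSet A) (hAbdd : Bornology.IsBounded A)
    (δ : ℝ) (hδ : 0 < δ) (p : ℝ) (hp0 : 0 ≤ p) (hpn : p < n) :
    ∫ x in (Metric.ball (0 : EuclideanSpace ℝ (Fin n)) δ) ×ˢ A,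
        (frobProd (fderiv ℝ
          (fun q : EuclideanSpace ℝ (Fin n) × EuclideanSpace ℝ (Fin m) => ‖q.1‖⁻¹ • q.1) x)) ^ p
      = ((n : ℝ) - 1) ^ (p / 2) *
          ((n : ℝ) * (volume (Metric.ball (0 : EuclideanSpace ℝ (Fin n)) 1)).toReal) *
          (volume A).toReal * δ ^ ((n : ℝ) - p) / ((n : ℝ) - p) :=
  stmt_4_general n m hn A δ hδ p hpn
end

section
/- Let (X, 𝔉, P) be a probability space, let h ≥ 1 be an integer, and let f_0, f_1, …, f_h : X → [0, ∞] be measurable functions. For a real number δ > 0, let A_δ be the set of points a ∈ X such that f_0(a) ≤ (1+δ)·∫_X f_0 dP and, for every i ∈ {1,…,h}, f_i(a) ≤ ((1+δ)·2h/δ)·∫_X f_i dP. Then P(A_δ) ≥ δ/(2+2δ). -/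
/-!
Markov's inequality bounds the probability that `f i` exceeds `c i` times its mean by `(c i)⁻¹`,
so a union bound leaves probability at least `1 - ∑ i, (c i)⁻¹` for all bounds holding at once.
With `c 0 = 1 + δ` and `c i = (1 + δ) 2h / δ` for the `h` other functions this sum is
`1 / (1 + δ) + δ / (2 + 2δ) = 1 - δ / (2 + 2δ)`.
-/

open MeasureTheory
open scoped ENNReal

section

variable {X : Type*} [MeasurableSpace X]

theorem measure_mul_lintegral_lt_le_inv (μ : Measure X) {f : X → ℝ≥0∞}
    (hf : AEMeasurable f μ) (c : ℝ≥0∞) :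
    μ {x | c * ∫⁻ y, f y ∂μ < f x} ≤ c⁻¹ := by
  set I := ∫⁻ y, f y ∂μ
  rcases eq_or_ne I 0 with hI0 | hI0
  · have hf0 : f =ᵐ[μ] 0 := (lintegral_eq_zero_iff' hf).mp hI0
    calc μ {x | c * I < f x} ≤ μ {x | f x ≠ 0} :=
          measure_mono (Set.ofPred_subset_ofPred.mpr fun _ hx => (pos_of_gt hx).ne')
      _ = 0 := ae_iff.mp hf0
      _ ≤ c⁻¹ := zero_le
  rcases eq_or_ne c 0 with rfl | hc0
  · simp
  rcases eq_or_ne (c * I) ∞ with hcI | hcI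
  · simp [hcI]
  calc μ {x | c * I < f x} ≤ μ {x | c * I ≤ f x} :=
        measure_mono (Set.ofPred_subset_ofPred.mpr fun _ => le_of_lt)
    _ ≤ I / (c * I) := meas_ge_le_lintegral_div hf (mul_ne_zero hc0 hI0) hcI
    _ = c⁻¹ := by
        rw [div_eq_mul_inv, ENNReal.mul_inv (Or.inl hc0) (Or.inr hI0), mul_left_comm,
          ENNReal.mul_inv_cancel hI0 fun hI => hcI (by rw [hI, ENNReal.mul_top hc0]), mul_one]

theorem measure_univ_sub_sum_inv_le_measure_forall_le_mul_lintegral (μ : Measure X)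
    {ι : Type*} (s : Finset ι) {f : ι → X → ℝ≥0∞} (hf : ∀ i ∈ s, AEMeasurable (f i) μ)
    (c : ι → ℝ≥0∞) :
    μ Set.univ - ∑ i ∈ s, (c i)⁻¹ ≤ μ {x | ∀ i ∈ s, f i x ≤ c i * ∫⁻ y, f i y ∂μ} := by
  set A := {x | ∀ i ∈ s, f i x ≤ c i * ∫⁻ y, f i y ∂μ}
  have hAc : Aᶜ = ⋃ i ∈ s, {x | c i * ∫⁻ y, f i y ∂μ < f i x} := by
    ext x
    simp [A]
  have hμAc : μ Aᶜ ≤ ∑ i ∈ s, (c i)⁻¹ :=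
    calc μ Aᶜ ≤ ∑ i ∈ s, μ {x | c i * ∫⁻ y, f i y ∂μ < f i x} :=
          hAc ▸ measure_biUnion_finset_le s _
      _ ≤ ∑ i ∈ s, (c i)⁻¹ :=
          Finset.sum_le_sum fun i hi => measure_mul_lintegral_lt_le_inv μ (hf i hi) (c i)
  have hcover : μ Set.univ ≤ μ A + μ Aᶜ :=
    calc μ Set.univ = μ (A ∪ Aᶜ) := by rw [Set.union_compl_self]
      _ ≤ μ A + μ Aᶜ := measure_union_le A Aᶜ
  calc μ Set.univ - ∑ i ∈ s, (c i)⁻¹ ≤ μ Set.univ - μ Aᶜ := tsub_le_tsub_left hμAc _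
    _ ≤ μ A := tsub_le_iff_right.mpr hcover

end

theorem natCast_mul_inv_ofReal_le {δ : ℝ} (hδ : 0 < δ) (n : ℕ) :
    n * (ENNReal.ofReal ((1 + δ) * (2 * n) / δ))⁻¹ ≤ ENNReal.ofReal (δ / (2 + 2 * δ)) := by
  rcases Nat.eq_zero_or_pos n with rfl | hn
  · simp
  have hn : (0 : ℝ) < n := Nat.cast_pos.mpr hn
  rw [← ENNReal.ofReal_inv_of_pos (by positivity), ← ENNReal.ofReal_natCast,
    ← ENNReal.ofReal_mul hn.le]
  refine ENNReal.ofReal_le_ofReal (le_of_eq ?_)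
  field_simp

theorem stmt_5_general {X : Type*} [MeasurableSpace X] (P : Measure X) [IsProbabilityMeasure P]
    (h : ℕ) (f : ℕ → X → ENNReal) (hf : ∀ i ≤ h, Measurable (f i))
    (δ : ℝ) (hδ : 0 < δ) :
    ENNReal.ofReal (δ / (2 + 2 * δ)) ≤
      P {a : X | f 0 a ≤ ENNReal.ofReal (1 + δ) * ∫⁻ x, f 0 x ∂P ∧
          ∀ i, 1 ≤ i → i ≤ h →
            f i a ≤ ENNReal.ofReal ((1 + δ) * (2 * h) / δ) * ∫⁻ x, f i x ∂P} := by
  set c : ℕ → ℝ≥0∞ := fun i =>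
    ENNReal.ofReal (if i = 0 then 1 + δ else (1 + δ) * (2 * h) / δ)
  have hsum : ∑ i ∈ Finset.range (h + 1), (c i)⁻¹ =
      h * (ENNReal.ofReal ((1 + δ) * (2 * h) / δ))⁻¹ + (ENNReal.ofReal (1 + δ))⁻¹ := by
    simp [c, Finset.sum_range_succ']
  have hbound : ENNReal.ofReal (δ / (2 + 2 * δ)) ≤ 1 - ∑ i ∈ Finset.range (h + 1), (c i)⁻¹ :=
    calc ENNReal.ofReal (δ / (2 + 2 * δ))
        = 1 - ENNReal.ofReal (δ / (2 + 2 * δ) + (1 + δ)⁻¹) := by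
          rw [← ENNReal.ofReal_one, ← ENNReal.ofReal_sub _ (by positivity)]
          congr 1
          field_simp
          ring
      _ ≤ 1 - ∑ i ∈ Finset.range (h + 1), (c i)⁻¹ := by
          rw [hsum, ENNReal.ofReal_add (by positivity) (by positivity),
            ENNReal.ofReal_inv_of_pos (by positivity)]
          exact tsub_le_tsub_left (add_le_add (natCast_mul_inv_ofReal_le hδ h) le_rfl) 1
  have hmarkov := measure_univ_sub_sum_inv_le_measure_forall_le_mul_lintegral P
    (Finset.range (h + 1)) (fun i hi => (hf i (Finset.mem_range_succ_iff.mp hi)).aemeasurable) c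
  rw [measure_univ] at hmarkov
  refine hbound.trans (hmarkov.trans (measure_mono fun x hx => ⟨?_, fun i hi1 hih => ?_⟩))
  · simpa [c] using hx 0 (by simp)
  · have hi0 : i ≠ 0 := by omega
    simpa [c, hi0] using hx i (Finset.mem_range_succ_iff.mpr hih)

/-- **Lemma 5.3 (lemma:elem).** Let `(X, 𝔉, P)` be a probability space, `h ≥ 1` an integer,
and `f 0, f 1, …, f h : X → [0,∞]` measurable. For `δ > 0`, the set `A_δ` of points `a`
with `f 0 a ≤ (1+δ)·∫ f 0 dP` and `f i a ≤ ((1+δ)·2h/δ)·∫ f i dP` for all `1 ≤ i ≤ h`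
satisfies `P(A_δ) ≥ δ/(2+2δ)`. -/
theorem stmt_5 {X : Type*} [MeasurableSpace X] (P : Measure X) [IsProbabilityMeasure P]
    (h : ℕ) (hh : 1 ≤ h) (f : ℕ → X → ENNReal) (hf : ∀ i ≤ h, Measurable (f i))
    (δ : ℝ) (hδ : 0 < δ) :
    ENNReal.ofReal (δ / (2 + 2 * δ)) ≤
      P {a : X | f 0 a ≤ ENNReal.ofReal (1 + δ) * ∫⁻ x, f 0 x ∂P ∧
          ∀ i, 1 ≤ i → i ≤ h →
            f i a ≤ ENNReal.ofReal ((1 + δ) * (2 * h) / δ) * ∫⁻ x, f i x ∂P} :=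
  stmt_5_general P h f hf δ hδ
end

section
/- Let d ≥ 1, let U ⊆ ℝ^d be open, let Ω ⊆ ℝ^d, let s ∈ (0,1) and p ≥ 1 be real numbers, and let u : U → ℝⁿ be a measurable map with finite Gagliardo seminorm [u]_{W^{s,p}(U)} := (∫_U ∫_U ‖u(x)−u(y)‖^p / ‖x−y‖^{d+sp} dx dy)^{1/p}. Then for every ε with 0 < ε < dist(Ω, ℝ^d∖U) it holds that ‖u∗ρ_ε − u‖_{L^p(Ω)} ≤ ‖ρ‖_{L∞}^{1/p} · ε^s · [u]_{W^{s,p}(U)}. -/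
open MeasureTheory
open scoped ENNReal NNReal

/-- Mollification `u ∗ ρ_ε` where `ρ_ε(y) = ε^(−d) ρ(y/ε)`. -/
noncomputable def mollify {d n : ℕ} (ρ : EuclideanSpace ℝ (Fin d) → ℝ) (ε : ℝ)
    (u : EuclideanSpace ℝ (Fin d) → EuclideanSpace ℝ (Fin n))
    (x : EuclideanSpace ℝ (Fin d)) : EuclideanSpace ℝ (Fin n) :=
  ∫ y, ((ε ^ d)⁻¹ * ρ (ε⁻¹ • y)) • u (x - y)

/-- **Lemma 3.1, first part (lemma:sobolev-convolution).** If `u : U → ℝⁿ` is measurable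
with finite Gagliardo seminorm `[u]_{W^{s,p}(U)}` and `0 < ε < dist(Ω, ℝ^d ∖ U)`, then
`‖u∗ρ_ε − u‖_{L^p(Ω)} ≤ ‖ρ‖_{L^∞}^{1/p} · ε^s · [u]_{W^{s,p}(U)}`. -/
theorem stmt_8 (d n : ℕ) (hd : 1 ≤ d)
    (ρ : EuclideanSpace ℝ (Fin d) → ℝ) (hρsm : ContDiff ℝ (⊤ : ℕ∞) ρ) (hρ0 : ∀ x, 0 ≤ ρ x)
    (hρsupp : Function.support ρ ⊆ Metric.closedBall 0 1) (hρint : ∫ x, ρ x = 1)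
    (U : Set (EuclideanSpace ℝ (Fin d))) (hU : IsOpen U)
    (Ω : Set (EuclideanSpace ℝ (Fin d)))
    (s p : ℝ) (hs0 : 0 < s) (hs1 : s < 1) (hp : 1 ≤ p)
    (u : EuclideanSpace ℝ (Fin d) → EuclideanSpace ℝ (Fin n))
    (hum : AEStronglyMeasurable u (volume.restrict U))
    (hGagliardo :
      (∫⁻ x in U, ∫⁻ y in U,
        ENNReal.ofReal (‖u x - u y‖ ^ p / ‖x - y‖ ^ ((d : ℝ) + s * p))) ≠ ⊤)
    (ε : ℝ) (hε : 0 < ε) (hεU : ∀ x ∈ Ω, ∀ y ∉ U, ε < dist x y) :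
    (∫⁻ x in Ω, ENNReal.ofReal (‖mollify ρ ε u x - u x‖ ^ p)) ^ (1 / p) ≤
      ENNReal.ofReal ((⨆ x, ρ x) ^ (1 / p)) * ENNReal.ofReal (ε ^ s) *
        (∫⁻ x in U, ∫⁻ y in U,
          ENNReal.ofReal (‖u x - u y‖ ^ p / ‖x - y‖ ^ ((d : ℝ) + s * p))) ^ (1 / p) := by
  classical
  have hp0 : (0:ℝ) < p := lt_of_lt_of_le one_pos hp
  have hρc : Continuous ρ := hρsm.continuous
  have hρcs : HasCompactSupport ρ :=
    HasCompactSupport.of_support_subset_isCompact (isCompact_closedBall (0:EuclideanSpace ℝ (Fin d)) 1) hρsupp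
  set G : ℝ≥0∞ := ∫⁻ x in U, ∫⁻ y in U,
      ENNReal.ofReal (‖u x - u y‖ ^ p / ‖x - y‖ ^ ((d : ℝ) + s * p)) with hGdef
  set g : EuclideanSpace ℝ (Fin d) → ℝ := fun y => (ε ^ d)⁻¹ * ρ (ε⁻¹ • y) with hgdef
  have hεd : (0:ℝ) < ε ^ d := pow_pos hε d
  have hg0 : ∀ y, 0 ≤ g y := fun y => mul_nonneg (inv_nonneg.2 hεd.le) (hρ0 _)
  have hgc : Continuous g := continuous_const.mul (hρc.comp (continuous_const_smul ε⁻¹))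
  have hgsupp : Function.support g ⊆ Metric.closedBall 0 ε := by
    intro y hy
    have h1 : ρ (ε⁻¹ • y) ≠ 0 := by
      intro h; apply hy; simp [hgdef, h]
    have h2 : ε⁻¹ • y ∈ Metric.closedBall (0:EuclideanSpace ℝ (Fin d)) 1 :=
      hρsupp (Function.mem_support.2 h1)
    simp only [Metric.mem_closedBall, dist_zero_right] at h2 ⊢
    have : ‖ε⁻¹ • y‖ = ε⁻¹ * ‖y‖ := by
      rw [norm_smul, Real.norm_eq_abs, abs_of_pos (inv_pos.2 hε)]
    rw [this] at h2
    calc ‖y‖ = ε * (ε⁻¹ * ‖y‖) := by field_simp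
    _ ≤ ε * 1 := by nlinarith
    _ = ε := mul_one ε
  have hgcs : HasCompactSupport g :=
    HasCompactSupport.of_support_subset_isCompact (isCompact_closedBall (0:EuclideanSpace ℝ (Fin d)) ε) hgsupp
  have hgzero : ∀ y : EuclideanSpace ℝ (Fin d), ε < ‖y‖ → g y = 0 := by
    intro y hy
    by_contra h
    have := hgsupp (Function.mem_support.2 h)
    simp only [Metric.mem_closedBall, dist_zero_right] at this
    linarith
  have hgint : Integrable g := hgc.integrable_of_hasCompactSupport hgcs
  have hgint1 : ∫ y, g y = 1 := by
    have h1 : ∫ y, ρ (ε⁻¹ • y) = |((ε⁻¹) ^ Module.finrank ℝ (EuclideanSpace ℝ (Fin d)))⁻¹| •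
        ∫ x, ρ x := Measure.integral_comp_smul volume ρ ε⁻¹
    have h2 : ∫ y, g y = (ε ^ d)⁻¹ • ∫ y, ρ (ε⁻¹ • y) := by
      simp only [hgdef, ← smul_eq_mul]
      exact integral_smul _ _
    rw [h2, h1, hρint, finrank_euclideanSpace_fin, smul_eq_mul, smul_eq_mul, mul_one,
      inv_pow, inv_inv, abs_of_pos hεd]
    field_simp
  set M : ℝ := ⨆ x, ρ x with hMdef
  have hM0 : 0 ≤ M := Real.iSup_nonneg hρ0
  have hMb : ∀ x, ρ x ≤ M := fun x =>
    le_ciSup (hρc.bddAbove_range_of_hasCompactSupport hρcs) x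
  -- a measurable superset of Ω with the same property
  obtain ⟨Ω', hΩ'm, hΩΩ', hΩ'U⟩ : ∃ Ω' : Set (EuclideanSpace ℝ (Fin d)),
      MeasurableSet Ω' ∧ Ω ⊆ Ω' ∧ ∀ x ∈ Ω', ∀ y ∉ U, ε < dist x y := by
    by_cases hUc : Uᶜ = ∅
    · refine ⟨Set.univ, MeasurableSet.univ, Set.subset_univ _, fun x _ y hy => ?_⟩
      exact absurd (Set.mem_compl hy) (by simp [hUc])
    · refine ⟨{x | ε < Metric.infDist x Uᶜ},
        ((Metric.continuous_infDist_pt Uᶜ).measurable measurableSet_Ioi), ?_, ?_⟩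
      · intro x hx
        obtain ⟨y, hyUc, hyd⟩ := hU.isClosed_compl.exists_infDist_eq_dist
          (Set.nonempty_iff_ne_empty.2 hUc) x
        have := hεU x hx y hyUc
        simpa [Set.mem_setOf_eq, hyd] using this
      · intro x hx y hy
        exact lt_of_lt_of_le hx (Metric.infDist_le_dist_of_mem hy)
  have hΩ'subU : Ω' ⊆ U := by
    intro x hx
    by_contra h
    have := hΩ'U x hx x h
    simp at this; linarith
  have hball : ∀ x ∈ Ω', Metric.closedBall x ε ⊆ U := by
    intro x hx z hz
    by_contra h
    have h1 := hΩ'U x hx z h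
    rw [Metric.mem_closedBall, dist_comm] at hz
    linarith
  -- nontriviality and no atoms
  have hnt : Nontrivial (EuclideanSpace ℝ (Fin d)) := by
    have hne : EuclideanSpace.single (⟨0, hd⟩ : Fin d) (1:ℝ) ≠ 0 := by
      intro h
      have h2 : EuclideanSpace.single (⟨0, hd⟩ : Fin d) (1:ℝ) ⟨0, hd⟩ = (0 : EuclideanSpace ℝ (Fin d)) ⟨0, hd⟩ := by rw [h]
      rw [EuclideanSpace.single_apply] at h2
      simp at h2
    exact ⟨⟨EuclideanSpace.single (⟨0, hd⟩ : Fin d) (1:ℝ), 0, hne⟩⟩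
  have hzero : volume ({0} : Set (EuclideanSpace ℝ (Fin d))) = 0 := by
    haveI := hnt
    simpa using Measure.addHaar_sphere (volume : Measure (EuclideanSpace ℝ (Fin d))) 0 0
  set F : EuclideanSpace ℝ (Fin d) → ℝ≥0∞ := fun x =>
    ∫⁻ y, ENNReal.ofReal (g y) * ENNReal.ofReal (‖u (x - y) - u x‖ ^ p) with hFdef
  set C : ℝ≥0∞ := ENNReal.ofReal (M * ε ^ (s * p)) with hCdef
  -- Key pointwise bound (Jensen)
  have key1 : ∀ x ∈ Ω', ENNReal.ofReal (‖mollify ρ ε u x - u x‖ ^ p) ≤ F x := by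
    intro x hx
    by_cases hFx : F x = ⊤
    · rw [hFx]; exact le_top
    set v : EuclideanSpace ℝ (Fin d) → EuclideanSpace ℝ (Fin n) :=
      fun y => u (x - y) - u x with hvdef
    set w : EuclideanSpace ℝ (Fin d) → ℝ≥0 := fun y => (g y).toNNReal with hwdef
    have hwm : Measurable w := hgc.measurable.real_toNNReal
    set μ : Measure (EuclideanSpace ℝ (Fin d)) :=
      volume.withDensity (fun y => (w y : ℝ≥0∞)) with hμdef
    have hcoe : ∀ y, ((w y : ℝ≥0∞)) = ENNReal.ofReal (g y) := fun y => rfl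
    have hwgm : Measurable fun y => ((w y : ℝ≥0∞)) := hwm.coe_nnreal_ennreal
    have hprob : IsProbabilityMeasure μ := by
      constructor
      rw [hμdef, withDensity_apply _ MeasurableSet.univ, Measure.restrict_univ]
      have h1 : ∫⁻ y, ((w y : ℝ≥0∞)) = ∫⁻ y, ENNReal.ofReal (g y) := rfl
      rw [h1, ← ofReal_integral_eq_lintegral_ofReal hgint (Filter.Eventually.of_forall hg0),
        hgint1, ENNReal.ofReal_one]
    haveI := hprob
    have hT : MeasurePreserving (fun y => x - y)
        (volume : Measure (EuclideanSpace ℝ (Fin d))) volume :=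
      Measure.measurePreserving_sub_left volume x
    have hTU : MeasurableSet ((fun y : EuclideanSpace ℝ (Fin d) => x - y) ⁻¹' U) :=
      hT.measurable hU.measurableSet
    have hcomp : AEStronglyMeasurable (fun y => u (x - y))
        (volume.restrict ((fun y : EuclideanSpace ℝ (Fin d) => x - y) ⁻¹' U)) :=
      hum.comp_measurePreserving (hT.restrict_preimage hU.measurableSet)
    have hac : μ ≪ volume.restrict ((fun y : EuclideanSpace ℝ (Fin d) => x - y) ⁻¹' U) := by
      intro A hA
      rw [Measure.restrict_apply' hTU] at hA
      have h1 : μ (A ∩ (fun y : EuclideanSpace ℝ (Fin d) => x - y) ⁻¹' U) = 0 :=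
        (withDensity_absolutelyContinuous volume _) hA
      have h2 : μ (((fun y : EuclideanSpace ℝ (Fin d) => x - y) ⁻¹' U)ᶜ) = 0 := by
        rw [hμdef, withDensity_apply _ hTU.compl]
        have hz : ∀ y ∈ ((fun y : EuclideanSpace ℝ (Fin d) => x - y) ⁻¹' U)ᶜ,
            ((w y : ℝ≥0∞)) = 0 := by
          intro y hy
          have hyU : x - y ∉ U := hy
          have hlt := hΩ'U x hx (x - y) hyU
          have hnorm : dist x (x - y) = ‖y‖ := by
            rw [dist_eq_norm, show x - (x - y) = y from by abel]
          rw [hcoe y, hgzero y (by rw [← hnorm]; exact hlt)]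
          simp
        calc ∫⁻ y in ((fun y : EuclideanSpace ℝ (Fin d) => x - y) ⁻¹' U)ᶜ, ((w y : ℝ≥0∞))
            = ∫⁻ _ in ((fun y : EuclideanSpace ℝ (Fin d) => x - y) ⁻¹' U)ᶜ, 0 :=
              setLIntegral_congr_fun hTU.compl (fun y hy => hz y hy)
          _ = 0 := lintegral_zero
      refine le_antisymm ?_ zero_le
      calc μ A ≤ μ ((A ∩ (fun y : EuclideanSpace ℝ (Fin d) => x - y) ⁻¹' U) ∪
            ((fun y : EuclideanSpace ℝ (Fin d) => x - y) ⁻¹' U)ᶜ) := by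
            refine measure_mono fun a ha => ?_
            by_cases h : a ∈ (fun y : EuclideanSpace ℝ (Fin d) => x - y) ⁻¹' U
            · exact Or.inl ⟨ha, h⟩
            · exact Or.inr h
        _ ≤ μ (A ∩ (fun y : EuclideanSpace ℝ (Fin d) => x - y) ⁻¹' U) +
            μ (((fun y : EuclideanSpace ℝ (Fin d) => x - y) ⁻¹' U)ᶜ) := measure_union_le _ _
        _ ≤ 0 := by rw [h1, h2, add_zero]
    have hv : AEStronglyMeasurable v μ :=
      (AEStronglyMeasurable.mono_ac hac hcomp).sub aestronglyMeasurable_const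
    have hvm : AEMeasurable (fun y => ((‖v y‖₊ : ℝ≥0∞)) ^ p) μ :=
      ENNReal.continuous_rpow_const.measurable.comp_aemeasurable hv.enorm
    have hFeq : ∫⁻ y, ((‖v y‖₊ : ℝ≥0∞)) ^ p ∂μ = F x := by
      rw [hμdef, lintegral_withDensity_eq_lintegral_mul₀' hwgm.aemeasurable
        (by rw [← hμdef]; exact hvm)]
      refine lintegral_congr fun y => ?_
      simp only [Pi.mul_apply, hcoe]
      congr 1
      rw [← enorm_eq_nnnorm, ← ofReal_norm, ENNReal.ofReal_rpow_of_nonneg (norm_nonneg _) hp0.le]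
    have h1p : (1:ℝ≥0∞) ≤ ENNReal.ofReal p := by
      rw [← ENNReal.ofReal_one]; exact ENNReal.ofReal_le_ofReal hp
    have hpne0 : (ENNReal.ofReal p) ≠ 0 := by
      rw [Ne, ENNReal.ofReal_eq_zero]; linarith
    have heLp : eLpNorm v (ENNReal.ofReal p) μ = (F x) ^ (1/p) := by
      rw [eLpNorm_eq_lintegral_rpow_enorm_toReal hpne0 ENNReal.ofReal_ne_top,
        ENNReal.toReal_ofReal hp0.le]
      simp only [enorm_eq_nnnorm, hFeq]
    have h1 : eLpNorm v 1 μ ≤ (F x) ^ (1/p) := by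
      rw [← heLp]; exact eLpNorm_le_eLpNorm_of_exponent_le h1p hv
    have hfin : ∫⁻ y, ((‖v y‖₊ : ℝ≥0∞)) ∂μ ≠ ⊤ := by
      simp only [← enorm_eq_nnnorm, ← eLpNorm_one_eq_lintegral_enorm]
      exact (h1.trans_lt (ENNReal.rpow_lt_top_of_nonneg (by positivity)
        hFx)).ne
    have hintv : Integrable v μ := ⟨hv, hfin.lt_top⟩
    have hiv : Integrable (fun y => g y • v y) volume := by
      have hintv' : Integrable v (volume.withDensity fun y => ((w y : ℝ≥0∞))) := by
        rw [hμdef] at hintv; exact hintv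
      have h3 : Integrable (fun y => w y • v y) volume :=
        (integrable_withDensity_iff_integrable_smul hwm).1 hintv'
      refine h3.congr (Filter.Eventually.of_forall fun y => ?_)
      simp only [NNReal.smul_def, hwdef, Real.coe_toNNReal _ (hg0 y)]
    have hic : Integrable (fun y => g y • u x) volume := hgint.smul_const (u x)
    have hmoll : mollify ρ ε u x = (∫ y, v y ∂μ) + u x := by
      calc mollify ρ ε u x
          = ∫ y, (g y • v y + g y • u x) := by
            rw [mollify]
            refine integral_congr_ae (Filter.Eventually.of_forall fun y => ?_)
            rw [hvdef]
            simp only [smul_sub]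
            abel
        _ = (∫ y, g y • v y) + ∫ y, g y • u x := integral_add hiv hic
        _ = (∫ y, v y ∂μ) + (∫ y, g y) • u x := by
            rw [integral_smul_const]
            congr 1
            rw [hμdef, integral_withDensity_eq_integral_smul hwm]
            refine integral_congr_ae (Filter.Eventually.of_forall fun y => ?_)
            simp only [NNReal.smul_def, hwdef, Real.coe_toNNReal _ (hg0 y)]
        _ = (∫ y, v y ∂μ) + u x := by rw [hgint1, one_smul]
    have hsub : mollify ρ ε u x - u x = ∫ y, v y ∂μ := by rw [hmoll]; abel
    calc ENNReal.ofReal (‖mollify ρ ε u x - u x‖ ^ p)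
        = (ENNReal.ofReal ‖∫ y, v y ∂μ‖) ^ p := by
          rw [hsub, ENNReal.ofReal_rpow_of_nonneg (norm_nonneg _) hp0.le]
      _ ≤ (∫⁻ y, ((‖v y‖₊ : ℝ≥0∞)) ∂μ) ^ p := by
          refine ENNReal.rpow_le_rpow ?_ hp0.le
          rw [ofReal_norm]
          exact enorm_integral_le_lintegral_enorm _
      _ = (eLpNorm v 1 μ) ^ p := by simp only [eLpNorm_one_eq_lintegral_enorm, enorm_eq_nnnorm]
      _ ≤ ((F x) ^ (1/p)) ^ p := ENNReal.rpow_le_rpow h1 hp0.le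
      _ = F x := by
          rw [← ENNReal.rpow_mul, one_div, inv_mul_cancel₀ hp0.ne', ENNReal.rpow_one]
  -- Key integral bound
  have key2 : ∀ x ∈ Ω', F x ≤ C *
      ∫⁻ z in U, ENNReal.ofReal (‖u x - u z‖ ^ p / ‖x - z‖ ^ ((d : ℝ) + s * p)) := by
    intro x hx
    set h : EuclideanSpace ℝ (Fin d) → ℝ≥0∞ :=
      fun z => ENNReal.ofReal (‖u x - u z‖ ^ p / ‖x - z‖ ^ ((d : ℝ) + s * p)) with hhdef
    have hae : ∀ᵐ y : EuclideanSpace ℝ (Fin d), y ≠ 0 := by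
      rw [ae_iff]; simpa using hzero
    have hpt : ∀ y : EuclideanSpace ℝ (Fin d), y ≠ 0 →
        ENNReal.ofReal (g y) * ENNReal.ofReal (‖u (x - y) - u x‖ ^ p) ≤
        C * (Metric.closedBall (0:EuclideanSpace ℝ (Fin d)) ε).indicator
          (fun y => h (x - y)) y := by
      intro y hy
      by_cases hyε : ‖y‖ ≤ ε
      · have hymem : y ∈ Metric.closedBall (0:EuclideanSpace ℝ (Fin d)) ε := by
          simpa [Metric.mem_closedBall, dist_zero_right] using hyε
        rw [Set.indicator_of_mem hymem, hhdef]
        simp only [sub_sub_cancel]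
        rw [norm_sub_rev (u x)]
        set A : ℝ := ‖u (x - y) - u x‖ ^ p with hAdef
        have hA0 : 0 ≤ A := Real.rpow_nonneg (norm_nonneg _) p
        have hy0 : (0:ℝ) < ‖y‖ := norm_pos_iff.2 hy
        set B : ℝ := ‖y‖ ^ ((d : ℝ) + s * p) with hBdef
        have hB0 : 0 < B := Real.rpow_pos_of_pos hy0 _
        have hreal : g y * A ≤ (M * ε ^ (s * p)) * (A / B) := by
          have hgle : g y ≤ M * ε ^ (s * p) / B := by
            have h1 : g y ≤ (ε ^ d)⁻¹ * M :=
              mul_le_mul_of_nonneg_left (hMb _) (inv_nonneg.2 hεd.le)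
            refine h1.trans ?_
            rw [le_div_iff₀ hB0]
            have hBle : B ≤ ε ^ ((d : ℝ) + s * p) :=
              Real.rpow_le_rpow (norm_nonneg y) hyε (by positivity)
            have hεexp : ε ^ ((d : ℝ) + s * p) = ε ^ d * ε ^ (s * p) := by
              rw [Real.rpow_add hε, Real.rpow_natCast]
            have hinv : (ε ^ d)⁻¹ * ε ^ d = 1 := inv_mul_cancel₀ hεd.ne'
            have hinvnn : (0:ℝ) ≤ (ε ^ d)⁻¹ := inv_nonneg.2 hεd.le
            calc (ε ^ d)⁻¹ * M * B = M * ((ε ^ d)⁻¹ * B) := by ring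
              _ ≤ M * ((ε ^ d)⁻¹ * (ε ^ d * ε ^ (s * p))) :=
                  mul_le_mul_of_nonneg_left
                    (mul_le_mul_of_nonneg_left (hεexp ▸ hBle) hinvnn) hM0
              _ = M * ε ^ (s * p) := by
                  rw [show (ε ^ d)⁻¹ * (ε ^ d * ε ^ (s * p)) = ((ε ^ d)⁻¹ * ε ^ d) * ε ^ (s * p)
                    from by ring, hinv, one_mul]
          calc g y * A ≤ (M * ε ^ (s * p) / B) * A :=
                mul_le_mul_of_nonneg_right hgle hA0
            _ = (M * ε ^ (s * p)) * (A / B) := by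
                rw [div_mul_eq_mul_div, mul_div_assoc]
        rw [hCdef, ← ENNReal.ofReal_mul (hg0 y), ← ENNReal.ofReal_mul (by positivity)]
        exact ENNReal.ofReal_le_ofReal hreal
      · rw [hgzero y (lt_of_not_ge hyε)]
        simp
    have hCtop : C ≠ ⊤ := by rw [hCdef]; exact ENNReal.ofReal_ne_top
    calc F x ≤ ∫⁻ y, C * (Metric.closedBall (0:EuclideanSpace ℝ (Fin d)) ε).indicator
          (fun y => h (x - y)) y := lintegral_mono_ae (hae.mono hpt)
      _ = C * ∫⁻ y, (Metric.closedBall (0:EuclideanSpace ℝ (Fin d)) ε).indicator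
          (fun y => h (x - y)) y := lintegral_const_mul' _ _ hCtop
      _ = C * ∫⁻ y in Metric.closedBall (0:EuclideanSpace ℝ (Fin d)) ε, h (x - y) := by
          rw [lintegral_indicator (measurableSet_closedBall) _]
      _ = C * ∫⁻ z in (fun y => x - y) '' Metric.closedBall (0:EuclideanSpace ℝ (Fin d)) ε,
            h z := by
          rw [(Measure.measurePreserving_sub_left volume x).setLIntegral_comp_emb
            (MeasurableEquiv.subLeft x).measurableEmbedding h _]
      _ = C * ∫⁻ z in Metric.closedBall x ε, h z := by
          have himg : (fun y => x - y) '' Metric.closedBall (0:EuclideanSpace ℝ (Fin d)) ε =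
              Metric.closedBall x ε := by
            ext z
            simp only [Set.mem_image, Metric.mem_closedBall, dist_zero_right]
            constructor
            · rintro ⟨y, hy, rfl⟩
              rw [dist_eq_norm]
              simpa using hy
            · intro hz
              exact ⟨x - z, by rwa [norm_sub_rev, ← dist_eq_norm], by abel⟩
          rw [himg]
      _ ≤ C * ∫⁻ z in U, h z := mul_le_mul_right (lintegral_mono_set (hball x hx)) C
  -- Putting it together
  have step1 : (∫⁻ x in Ω, ENNReal.ofReal (‖mollify ρ ε u x - u x‖ ^ p)) ≤ C * G := by
    calc (∫⁻ x in Ω, ENNReal.ofReal (‖mollify ρ ε u x - u x‖ ^ p))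
        ≤ ∫⁻ x in Ω', ENNReal.ofReal (‖mollify ρ ε u x - u x‖ ^ p) :=
          lintegral_mono_set hΩΩ'
      _ ≤ ∫⁻ x in Ω', F x :=
          lintegral_mono_ae ((ae_restrict_mem hΩ'm).mono fun x hx => key1 x hx)
      _ ≤ ∫⁻ x in Ω', C *
            ∫⁻ z in U, ENNReal.ofReal (‖u x - u z‖ ^ p / ‖x - z‖ ^ ((d : ℝ) + s * p)) :=
          lintegral_mono_ae ((ae_restrict_mem hΩ'm).mono fun x hx => key2 x hx)
      _ = C * ∫⁻ x in Ω',
            ∫⁻ z in U, ENNReal.ofReal (‖u x - u z‖ ^ p / ‖x - z‖ ^ ((d : ℝ) + s * p)) :=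
          lintegral_const_mul' _ _ ENNReal.ofReal_ne_top
      _ ≤ C * ∫⁻ x in U,
            ∫⁻ z in U, ENNReal.ofReal (‖u x - u z‖ ^ p / ‖x - z‖ ^ ((d : ℝ) + s * p)) :=
          mul_le_mul_right (lintegral_mono_set hΩ'subU) C
      _ = C * G := rfl
  have hC : C ^ (1/p) = ENNReal.ofReal (M ^ (1/p)) * ENNReal.ofReal (ε ^ s) := by
    rw [hCdef, ENNReal.ofReal_mul hM0,
      ENNReal.mul_rpow_of_nonneg _ _ (by positivity : (0:ℝ) ≤ 1/p),
      ENNReal.ofReal_rpow_of_nonneg hM0 (by positivity),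
      ENNReal.ofReal_rpow_of_nonneg (by positivity) (by positivity)]
    congr 2
    rw [← Real.rpow_mul hε.le]
    congr 1
    field_simp
  calc (∫⁻ x in Ω, ENNReal.ofReal (‖mollify ρ ε u x - u x‖ ^ p)) ^ (1 / p)
      ≤ (C * G) ^ (1 / p) := ENNReal.rpow_le_rpow step1 (by positivity)
    _ = C ^ (1/p) * G ^ (1/p) := ENNReal.mul_rpow_of_nonneg _ _ (by positivity)
    _ = ENNReal.ofReal (M ^ (1/p)) * ENNReal.ofReal (ε ^ s) * G ^ (1/p) := by rw [hC]
end

section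
/- There exists a constant C > 0 such that for every integer n ≥ 2, every a ∈ ℝⁿ with ‖a‖ < 1/8, every x in the open unit ball of ℝⁿ with x ≠ a, and every y ∈ ℝⁿ with ‖y‖ = 1, it holds that ‖π_a(x) − y‖ ≤ C·‖x − y‖. -/
/-!
Write `r = ‖x - a‖`, `u = (x - a) / r` and `α = ⟪a, u⟫`. Then `tproj a x` is the positive root
`-α + √(α² + 1 - ‖a‖²)` of `q(s) = ‖a + s u‖² - 1 = s² + 2αs + ‖a‖² - 1`, and `q(r) = ‖x‖² - 1`.
Factoring `q` shows that `tproj a x - r`, which is the distance from `x` to `π_a(x)`, equals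
`(1 - ‖x‖²)` divided by the distance from `r` to the other root, and that distance is at least
`1 - 2‖a‖`. Finally `1 - ‖x‖² ≤ 2 ‖x - y‖` for a unit vector `y`, and the triangle inequality
through `x` gives the estimate with `C = 1 + 2 / (1 - 2‖a‖) ≤ 11/3` when `‖a‖ < 1/8`.
-/

open scoped RealInnerProductSpace

/-- The scalar factor `t_a(x)` of the radial projection from `a` onto the unit sphere. -/
noncomputable def tproj {n : ℕ} (a x : EuclideanSpace ℝ (Fin n)) : ℝ :=
  -(⟪a, x - a⟫ / ‖x - a‖) + Real.sqrt ((⟪a, x - a⟫ / ‖x - a‖) ^ 2 + 1 - ‖a‖ ^ 2)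

/-- The radial projection `π_a(x) = a + t_a(x)·(x−a)/‖x−a‖` from `a` onto the unit sphere. -/
noncomputable def piProj {n : ℕ} (a x : EuclideanSpace ℝ (Fin n)) :
    EuclideanSpace ℝ (Fin n) :=
  a + (tproj a x / ‖x - a‖) • (x - a)

section RadialProjection

variable {n : ℕ} {a x : EuclideanSpace ℝ (Fin n)}

/-- The other root of the quadratic whose positive root is `tproj a x`. -/
noncomputable def tprojConj (a x : EuclideanSpace ℝ (Fin n)) : ℝ :=
  -(⟪a, x - a⟫ / ‖x - a‖) - Real.sqrt ((⟪a, x - a⟫ / ‖x - a‖) ^ 2 + 1 - ‖a‖ ^ 2)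

lemma abs_inner_div_norm_le {E : Type*} [NormedAddCommGroup E] [InnerProductSpace ℝ E]
    (a v : E) : |⟪a, v⟫ / ‖v‖| ≤ ‖a‖ := by
  rw [abs_div, abs_norm]
  exact div_le_of_le_mul₀ (norm_nonneg v) (norm_nonneg a) (abs_real_inner_le_norm a v)

lemma tproj_sub_norm_mul_norm_sub_tprojConj (ha : ‖a‖ ≤ 1) (hxa : x ≠ a) :
    (tproj a x - ‖x - a‖) * (‖x - a‖ - tprojConj a x) = 1 - ‖x‖ ^ 2 := by
  unfold tproj tprojConj
  set r := ‖x - a‖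
  set α := ⟪a, x - a⟫ / r
  have hr : r ≠ 0 := norm_ne_zero_iff.mpr (sub_ne_zero.mpr hxa)
  have hsqrt : √(α ^ 2 + 1 - ‖a‖ ^ 2) ^ 2 = α ^ 2 + 1 - ‖a‖ ^ 2 :=
    Real.sq_sqrt (by nlinarith [norm_nonneg a, sq_nonneg α])
  have hx : ‖x‖ ^ 2 = ‖a‖ ^ 2 + 2 * (α * r) + r ^ 2 := by
    rw [div_mul_cancel₀ _ hr, ← norm_add_sq_real, add_sub_cancel]
  linear_combination hsqrt + hx

lemma one_sub_two_mul_norm_le_norm_sub_tprojConj (ha : ‖a‖ ≤ 1) :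
    1 - 2 * ‖a‖ ≤ ‖x - a‖ - tprojConj a x := by
  unfold tprojConj
  set α := ⟪a, x - a⟫ / ‖x - a‖
  have hα : -‖a‖ ≤ α := (abs_le.mp (abs_inner_div_norm_le a (x - a))).1
  have hsqrt : 1 - ‖a‖ ≤ √(α ^ 2 + 1 - ‖a‖ ^ 2) :=
    Real.le_sqrt_of_sq_le (by nlinarith [norm_nonneg a, sq_nonneg α])
  linarith [norm_nonneg (x - a)]

lemma tproj_sub_norm_nonneg_and_le (ha : ‖a‖ < 1 / 2) (hx : ‖x‖ ≤ 1) (hxa : x ≠ a) :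
    0 ≤ tproj a x - ‖x - a‖ ∧ (1 - 2 * ‖a‖) * (tproj a x - ‖x - a‖) ≤ 1 - ‖x‖ ^ 2 := by
  have ha1 : ‖a‖ ≤ 1 := by linarith
  have hprod := tproj_sub_norm_mul_norm_sub_tprojConj ha1 hxa
  have hfactor := one_sub_two_mul_norm_le_norm_sub_tprojConj (x := x) ha1
  have hrhs : 0 ≤ 1 - ‖x‖ ^ 2 := by nlinarith [norm_nonneg x]
  have hnonneg : 0 ≤ tproj a x - ‖x - a‖ :=
    nonneg_of_mul_nonneg_left (hprod ▸ hrhs) (by linarith)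
  refine ⟨hnonneg, ?_⟩
  calc (1 - 2 * ‖a‖) * (tproj a x - ‖x - a‖)
      ≤ (‖x - a‖ - tprojConj a x) * (tproj a x - ‖x - a‖) :=
        mul_le_mul_of_nonneg_right hfactor hnonneg
    _ = 1 - ‖x‖ ^ 2 := by rw [mul_comm, hprod]

lemma piProj_sub_self :
    piProj a x - x = (tproj a x / ‖x - a‖ - 1) • (x - a) := by
  rw [piProj, sub_smul, one_smul]
  abel

lemma norm_piProj_sub_self (hxa : x ≠ a) :
    ‖piProj a x - x‖ = |tproj a x - ‖x - a‖| := by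
  have hr : 0 < ‖x - a‖ := norm_sub_pos_iff.mpr hxa
  rw [piProj_sub_self, norm_smul, Real.norm_eq_abs, ← abs_norm (x - a), ← abs_mul, abs_norm,
    sub_mul, div_mul_cancel₀ _ hr.ne', one_mul]

end RadialProjection

lemma one_sub_norm_sq_le_two_mul_norm_sub {E : Type*} [SeminormedAddCommGroup E] {x y : E}
    (hy : ‖y‖ = 1) : 1 - ‖x‖ ^ 2 ≤ 2 * ‖x - y‖ := by
  have h : 1 - ‖x‖ ≤ ‖x - y‖ := by
    rw [norm_sub_rev, ← hy]
    exact norm_sub_norm_le y x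
  nlinarith [sq_nonneg (1 - ‖x‖)]

lemma norm_piProj_sub_le {n : ℕ} {a x y : EuclideanSpace ℝ (Fin n)} (ha : ‖a‖ < 1 / 2)
    (hx : ‖x‖ ≤ 1) (hxa : x ≠ a) (hy : ‖y‖ = 1) :
    ‖piProj a x - y‖ ≤ (1 + 2 / (1 - 2 * ‖a‖)) * ‖x - y‖ := by
  obtain ⟨hnonneg, hle⟩ := tproj_sub_norm_nonneg_and_le ha hx hxa
  have hpos : 0 < 1 - 2 * ‖a‖ := by linarith
  have hdist : ‖piProj a x - x‖ ≤ 2 / (1 - 2 * ‖a‖) * ‖x - y‖ := by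
    rw [norm_piProj_sub_self hxa, abs_of_nonneg hnonneg, div_mul_eq_mul_div, le_div_iff₀ hpos]
    linarith [one_sub_norm_sq_le_two_mul_norm_sub (x := x) hy]
  calc ‖piProj a x - y‖ ≤ ‖piProj a x - x‖ + ‖x - y‖ := norm_sub_le_norm_sub_add_norm_sub _ _ _
    _ ≤ (1 + 2 / (1 - 2 * ‖a‖)) * ‖x - y‖ := by linarith

/-- Second estimate in (est:pi_a) from the proof of Proposition 3.2 (prop:approx):
there is a universal constant `C > 0` such that for every `n ≥ 2`, every `a` with
`‖a‖ < 1/8`, every `x` in the open unit ball with `x ≠ a`, and every unit vector `y`,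
`‖π_a(x) − y‖ ≤ C·‖x − y‖`. -/
theorem stmt_12 :
    ∃ C : ℝ, 0 < C ∧ ∀ n : ℕ, 2 ≤ n → ∀ a x y : EuclideanSpace ℝ (Fin n),
      ‖a‖ < 1 / 8 → ‖x‖ < 1 → x ≠ a → ‖y‖ = 1 →
        ‖piProj a x - y‖ ≤ C * ‖x - y‖ := by
  refine ⟨4, by norm_num, fun n _ a x y ha hx hxa hy => ?_⟩
  have hconst : 1 + 2 / (1 - 2 * ‖a‖) ≤ 4 := by
    rw [← le_sub_iff_add_le', div_le_iff₀ (by linarith)]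
    linarith
  calc ‖piProj a x - y‖ ≤ (1 + 2 / (1 - 2 * ‖a‖)) * ‖x - y‖ :=
        norm_piProj_sub_le (by linarith) hx.le hxa hy
    _ ≤ 4 * ‖x - y‖ := mul_le_mul_of_nonneg_right hconst (norm_nonneg _)
end

section
/- There exists a constant C > 0 such that for every integer n ≥ 2 and every a ∈ ℝⁿ with ‖a‖ < 1/8, the functions t_a and π_a are differentiable at every point x of the open unit ball of ℝⁿ with x ≠ a, with ‖∇t_a(x)‖ ≤ C·‖a‖/‖x−a‖ and with the operator norm of the Fréchet derivative of π_a at x bounded by C/‖x−a‖. -/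
/-!
With `ν(y) = ‖y - a‖⁻¹ • (y - a)`, whose derivative has norm at most `2 / ‖y - a‖`, one has
`t_a = φ ∘ ⟪a, ν ·⟫` for `φ(s) = -s + √(s² + c)`, `c = 1 - ‖a‖² > 0`. Since `|s| ≤ √(s² + c)`,
`|φ'| ≤ 2`, and the chain rule bounds `∇t_a` by `4‖a‖ / ‖x - a‖`. Then `π_a = a + t_a • ν` with
`|t_a| ≤ 2‖a‖ + 1`, so the product rule bounds `Dπ_a` by `(2 + 8‖a‖) / ‖x - a‖`.
-/

open scoped RealInnerProductSpace

section UnitVector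

variable {E : Type*} [NormedAddCommGroup E] [InnerProductSpace ℝ E]

theorem exists_hasFDerivAt_norm_of_ne_zero {u : E} (hu : u ≠ 0) :
    ∃ N : StrongDual ℝ E, HasFDerivAt (‖·‖) N u ∧ ‖N‖ ≤ 1 := by
  have hN := (contDiffAt_norm ℝ (n := 1) hu).differentiableAt one_ne_zero |>.hasFDerivAt
  exact ⟨_, hN, by simpa using hN.le_of_lipschitz lipschitzWith_one_norm⟩

theorem exists_hasFDerivAt_inv_norm_smul {u : E} (hu : u ≠ 0) :
    ∃ D : E →L[ℝ] E, HasFDerivAt (fun v : E => ‖v‖⁻¹ • v) D u ∧ ‖D‖ ≤ 2 / ‖u‖ := by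
  obtain ⟨N, hN, hN_le⟩ := exists_hasFDerivAt_norm_of_ne_zero hu
  have hr : 0 < ‖u‖ := norm_pos_iff.mpr hu
  have hinv := (hasDerivAt_inv hr.ne').comp_hasFDerivAt u hN
  refine ⟨_, hinv.smul (hasFDerivAt_id u), ?_⟩
  calc ‖‖u‖⁻¹ • ContinuousLinearMap.id ℝ E + ((-(‖u‖ ^ 2)⁻¹) • N).smulRight (id u)‖
      ≤ ‖u‖⁻¹ * 1 + (‖u‖ ^ 2)⁻¹ * 1 * ‖u‖ := by
        refine (norm_add_le _ _).trans (add_le_add ?_ ?_)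
        · rw [norm_smul, norm_inv, norm_norm]
          gcongr
          exact ContinuousLinearMap.norm_id_le
        · rw [ContinuousLinearMap.norm_smulRight_apply, norm_smul, norm_neg, norm_inv, norm_pow,
            norm_norm, id]
          gcongr
    _ = 2 / ‖u‖ := by field_simp; ring

end UnitVector

section Profile

variable {c : ℝ}

theorem hasDerivAt_neg_add_sqrt_sq_add (hc : 0 < c) (s : ℝ) :
    HasDerivAt (fun s => -s + √(s ^ 2 + c)) (-1 + s / √(s ^ 2 + c)) s := by
  have hpos : 0 < s ^ 2 + c := by positivity
  refine ((hasDerivAt_id s).neg.add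
    (((hasDerivAt_pow 2 s).add_const c).sqrt hpos.ne')).congr_deriv ?_
  have : √(s ^ 2 + c) ≠ 0 := (Real.sqrt_pos.mpr hpos).ne'
  field_simp
  ring

theorem abs_neg_add_div_sqrt_sq_add_le (hc : 0 ≤ c) (s : ℝ) :
    |-1 + s / √(s ^ 2 + c)| ≤ 2 := by
  have h : |s / √(s ^ 2 + c)| ≤ 1 := by
    rw [abs_div, abs_of_nonneg (Real.sqrt_nonneg _)]
    exact div_le_one_of_le₀ (Real.abs_le_sqrt (by linarith)) (Real.sqrt_nonneg _)
  calc |-1 + s / √(s ^ 2 + c)| ≤ |-1| + |s / √(s ^ 2 + c)| := abs_add_le _ _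
    _ ≤ 2 := by rw [abs_neg, abs_one]; linarith

theorem abs_neg_add_sqrt_sq_add_le (hc : c ≤ 1) (s : ℝ) :
    |-s + √(s ^ 2 + c)| ≤ 2 * |s| + 1 := by
  have h : √(s ^ 2 + c) ≤ |s| + 1 :=
    Real.sqrt_le_iff.mpr ⟨by positivity, by nlinarith [sq_abs s, abs_nonneg s]⟩
  calc |-s + √(s ^ 2 + c)| ≤ |-s| + |√(s ^ 2 + c)| := abs_add_le _ _
    _ ≤ 2 * |s| + 1 := by rw [abs_neg, abs_of_nonneg (Real.sqrt_nonneg _)]; linarith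

end Profile

section RadialProjection

variable {n : ℕ} {a x : EuclideanSpace ℝ (Fin n)}

theorem tproj_eq_comp (a : EuclideanSpace ℝ (Fin n)) :
    tproj a = (fun s => -s + √(s ^ 2 + (1 - ‖a‖ ^ 2))) ∘ fun y => ⟪a, ‖y - a‖⁻¹ • (y - a)⟫ := by
  funext y
  simp only [tproj, Function.comp_apply, real_inner_smul_right, add_sub_assoc, div_eq_inv_mul]

theorem abs_tproj_le (a x : EuclideanSpace ℝ (Fin n)) : |tproj a x| ≤ 2 * ‖a‖ + 1 := by
  rw [tproj_eq_comp, Function.comp_apply]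
  refine (abs_neg_add_sqrt_sq_add_le (by linarith [sq_nonneg ‖a‖]) _).trans ?_
  have hunit : ‖‖x - a‖⁻¹ • (x - a)‖ ≤ 1 := by
    rw [norm_smul, norm_inv, norm_norm]
    exact inv_mul_le_one_of_le₀ le_rfl (norm_nonneg _)
  gcongr
  calc |⟪a, ‖x - a‖⁻¹ • (x - a)⟫| ≤ ‖a‖ * ‖‖x - a‖⁻¹ • (x - a)‖ := abs_real_inner_le_norm _ _
    _ ≤ ‖a‖ := mul_le_of_le_one_right (norm_nonneg a) hunit

theorem exists_hasFDerivAt_tproj (ha : ‖a‖ < 1) (hx : x ≠ a) :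
    ∃ D : StrongDual ℝ (EuclideanSpace ℝ (Fin n)),
      HasFDerivAt (tproj a) D x ∧ ‖D‖ ≤ 4 * ‖a‖ / ‖x - a‖ := by
  obtain ⟨Dν, hν, hν_le⟩ := exists_hasFDerivAt_inv_norm_smul (sub_ne_zero.mpr hx)
  have hs := (innerSL ℝ a).hasFDerivAt.comp x (hν.comp x (hasFDerivAt_sub_const a))
  have hc : 0 < 1 - ‖a‖ ^ 2 := by nlinarith [norm_nonneg a]
  rw [tproj_eq_comp]
  refine ⟨_, (hasDerivAt_neg_add_sqrt_sq_add hc _).comp_hasFDerivAt x hs, ?_⟩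
  have hs_le : ‖(innerSL ℝ a).comp Dν‖ ≤ 2 * ‖a‖ / ‖x - a‖ :=
    calc _ ≤ ‖innerSL ℝ a‖ * ‖Dν‖ := ContinuousLinearMap.opNorm_comp_le _ _
      _ ≤ ‖a‖ * (2 / ‖x - a‖) := by rw [innerSL_apply_norm]; gcongr
      _ = 2 * ‖a‖ / ‖x - a‖ := by ring
  rw [norm_smul, ContinuousLinearMap.comp_id, Real.norm_eq_abs]
  calc _ ≤ 2 * (2 * ‖a‖ / ‖x - a‖) :=
        mul_le_mul (abs_neg_add_div_sqrt_sq_add_le hc.le _) hs_le (norm_nonneg _) zero_le_two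
    _ = 4 * ‖a‖ / ‖x - a‖ := by ring

theorem piProj_eq (a : EuclideanSpace ℝ (Fin n)) :
    piProj a = fun y => a + tproj a y • (‖y - a‖⁻¹ • (y - a)) := by
  funext y
  rw [piProj, smul_smul, div_eq_mul_inv]

theorem exists_hasFDerivAt_piProj (ha : ‖a‖ < 1) (hx : x ≠ a) :
    ∃ D : EuclideanSpace ℝ (Fin n) →L[ℝ] EuclideanSpace ℝ (Fin n),
      HasFDerivAt (piProj a) D x ∧ ‖D‖ ≤ (2 + 8 * ‖a‖) / ‖x - a‖ := by
  have hu : x - a ≠ 0 := sub_ne_zero.mpr hx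
  obtain ⟨Dt, ht, ht_le⟩ := exists_hasFDerivAt_tproj ha hx
  obtain ⟨Dν, hν, hν_le⟩ := exists_hasFDerivAt_inv_norm_smul hu
  have hπ : HasFDerivAt (piProj a)
      (tproj a x • Dν + Dt.smulRight (‖x - a‖⁻¹ • (x - a))) x := by
    have h := (ht.smul (hν.comp x (hasFDerivAt_sub_const a))).const_add a
    rw [ContinuousLinearMap.comp_id] at h
    rw [piProj_eq]
    exact h
  refine ⟨_, hπ, ?_⟩
  calc _ ≤ |tproj a x| * ‖Dν‖ + ‖Dt‖ * ‖‖x - a‖⁻¹ • (x - a)‖ := by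
        refine (norm_add_le _ _).trans_eq ?_
        rw [norm_smul, Real.norm_eq_abs, ContinuousLinearMap.norm_smulRight_apply]
    _ ≤ (2 * ‖a‖ + 1) * (2 / ‖x - a‖) + 4 * ‖a‖ / ‖x - a‖ * 1 := by
        rw [norm_smul, norm_inv, norm_norm, inv_mul_cancel₀ (norm_ne_zero_iff.mpr hu)]
        gcongr
        exact abs_tproj_le a x
    _ = (2 + 8 * ‖a‖) / ‖x - a‖ := by ring

end RadialProjection

/-- Gradient estimates (est:t_a) and (est:pi_a) from the proof of Proposition 3.2
(prop:approx): there is a universal constant `C > 0` such that for every `n ≥ 2`,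
every `a` with `‖a‖ < 1/8`, and every `x` in the open unit ball with `x ≠ a`, the maps
`t_a` and `π_a` are differentiable at `x` with `‖∇t_a(x)‖ ≤ C‖a‖/‖x−a‖` and the operator
norm of the derivative of `π_a` at `x` bounded by `C/‖x−a‖`. -/
theorem stmt_13 :
    ∃ C : ℝ, 0 < C ∧ ∀ n : ℕ, 2 ≤ n → ∀ a x : EuclideanSpace ℝ (Fin n),
      ‖a‖ < 1 / 8 → ‖x‖ < 1 → x ≠ a →
        ∃ (Dt : EuclideanSpace ℝ (Fin n) →L[ℝ] ℝ)
          (Dπ : EuclideanSpace ℝ (Fin n) →L[ℝ] EuclideanSpace ℝ (Fin n)),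
          HasFDerivAt (tproj a) Dt x ∧ HasFDerivAt (piProj a) Dπ x ∧
          ‖Dt‖ ≤ C * ‖a‖ / ‖x - a‖ ∧ ‖Dπ‖ ≤ C / ‖x - a‖ := by
  refine ⟨10, by norm_num, fun n _ a x ha _ hx => ?_⟩
  have ha1 : ‖a‖ < 1 := ha.trans (by norm_num)
  obtain ⟨Dt, ht, ht_le⟩ := exists_hasFDerivAt_tproj ha1 hx
  obtain ⟨Dπ, hπ, hπ_le⟩ := exists_hasFDerivAt_piProj ha1 hx
  refine ⟨Dt, Dπ, ht, hπ, ht_le.trans ?_, hπ_le.trans ?_⟩ <;> gcongr <;> linarith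
end
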